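/- Let b₁ ∈ ℝ, b₂ > 0 with b₂² > 4 + 4b₁², and b₃ ∈ ℝ. Define k : ℝ → ℝ by k(s) = 2/(b₂ + √(b₂² − 4 − 4b₁²)·sin(2(s + b₃))). Then the denominator b₂ + √(b₂² − 4 − 4b₁²)·sin(2(s + b₃)) is strictly positive for all s, the function k is positive and non-constant, and k satisfies (3/4)·k'(s)² − (1/2)·k(s)·k''(s) − (1 + b₁²)·k(s)⁴ + k(s)² = 0 for every s ∈ ℝ. -/

import Mathlib

/-!
Writing `k = 2 / D`, the left-hand side of the ODE equals
`(2 D D'' - D'² + 4 D² - 16 (1 + b₁²)) / D⁴`. For the sinusoid `D = b₂ + a sin 2(s + b₃)`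
the quantity `2 D D'' - D'² + 4 D²` is the conserved energy `4 (b₂² - a²)`, which equals
`16 (1 + b₁²)` exactly when `a = √(b₂² - 4 - 4 b₁²)`. Since `0 < a < b₂`, `D` is positive and
takes the two distinct values `b₂ ± a`.
-/

open Real

section Reciprocal

variable {f f' f'' : ℝ → ℝ}

theorem hasDerivAt_two_div (hf : ∀ s, HasDerivAt f (f' s) s) (hne : ∀ s, f s ≠ 0) (s : ℝ) :
    HasDerivAt (fun s => 2 / f s) (-2 * f' s / f s ^ 2) s := by
  refine (((hf s).inv (hne s)).const_mul 2).congr_deriv ?_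
  ring

theorem hasDerivAt_deriv_two_div (hf : ∀ s, HasDerivAt f (f' s) s)
    (hf' : ∀ s, HasDerivAt f' (f'' s) s) (hne : ∀ s, f s ≠ 0) (s : ℝ) :
    HasDerivAt (deriv fun s => 2 / f s)
      ((-2 * f'' s * f s ^ 2 + 2 * f' s * (2 * f s * f' s)) / (f s ^ 2) ^ 2) s := by
  rw [funext fun s => (hasDerivAt_two_div hf hne s).deriv]
  refine (((hf' s).const_mul (-2)).div ((hf s).pow 2) (pow_ne_zero 2 (hne s))).congr_deriv ?_
  simp only [Pi.pow_apply]
  ring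

theorem ode_two_div_eq (hf : ∀ s, HasDerivAt f (f' s) s) (hf' : ∀ s, HasDerivAt f' (f'' s) s)
    (hne : ∀ s, f s ≠ 0) (B s : ℝ) :
    3 / 4 * deriv (fun s => 2 / f s) s ^ 2
        - 1 / 2 * (2 / f s) * deriv (deriv fun s => 2 / f s) s
        - B * (2 / f s) ^ 4 + (2 / f s) ^ 2
      = (2 * f s * f'' s - f' s ^ 2 + 4 * f s ^ 2 - 16 * B) / f s ^ 4 := by
  rw [(hasDerivAt_two_div hf hne s).deriv, (hasDerivAt_deriv_two_div hf hf' hne s).deriv]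
  have := hne s
  field_simp
  ring

end Reciprocal

section Sinusoid

variable (a b c : ℝ)

theorem hasDerivAt_sinusoid (s : ℝ) :
    HasDerivAt (fun s => b + a * sin (2 * (s + c))) (2 * a * cos (2 * (s + c))) s := by
  refine (((((hasDerivAt_id' s).add_const c).const_mul 2).sin.const_mul a).const_add b).congr_deriv
    ?_
  ring

theorem hasDerivAt_sinusoid_deriv (s : ℝ) :
    HasDerivAt (fun s => 2 * a * cos (2 * (s + c))) (-4 * a * sin (2 * (s + c))) s := by
  refine ((((hasDerivAt_id' s).add_const c).const_mul 2).cos.const_mul (2 * a)).congr_deriv ?_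
  ring

theorem sinusoid_energy (x : ℝ) :
    2 * (b + a * sin x) * (-4 * a * sin x) - (2 * a * cos x) ^ 2 + 4 * (b + a * sin x) ^ 2
      = 4 * (b ^ 2 - a ^ 2) := by
  linear_combination (-4 * a ^ 2) * sin_sq_add_cos_sq x

variable {a b}

theorem exists_two_div_sinusoid_ne (ha : a ≠ 0) :
    ∃ s t, 2 / (b + a * sin (2 * (s + c))) ≠ 2 / (b + a * sin (2 * (t + c))) := by
  refine ⟨π / 4 - c, -(π / 4) - c, ?_⟩
  simp only [sub_add_cancel, mul_neg, show 2 * (π / 4) = π / 2 by ring, sin_neg, sin_pi_div_two,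
    mul_one]
  rw [Ne, div_eq_mul_inv, div_eq_mul_inv, mul_right_inj' two_ne_zero, inv_inj]
  intro h
  exact ha (by linarith)

theorem sinusoid_pos (hab : |a| < b) (x : ℝ) : 0 < b + a * sin x := by
  have : |a * sin x| ≤ |a| := by
    rw [abs_mul]
    exact mul_le_of_le_one_right (abs_nonneg a) (abs_sin_le_one x)
  linarith [neg_abs_le (a * sin x)]

end Sinusoid

/-- In `S³` (K = 1): `k(s) = 2/(b₂ + √(b₂²−4−4b₁²) sin 2(s+b₃))` with `b₂ > 0`,
`b₂² > 4 + 4b₁²`, has positive denominator, is positive, non-constant and satisfies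
`(3/4)k'² − (1/2)k k'' − (1+b₁²)k⁴ + k² = 0`. -/
theorem stmt_11 (b₁ b₂ b₃ : ℝ) (hb₂ : 0 < b₂) (hb : 4 + 4 * b₁ ^ 2 < b₂ ^ 2)
    (k : ℝ → ℝ)
    (hk : k = fun s =>
      2 / (b₂ + Real.sqrt (b₂ ^ 2 - 4 - 4 * b₁ ^ 2) * Real.sin (2 * (s + b₃)))) :
    (∀ s : ℝ, 0 < b₂ + Real.sqrt (b₂ ^ 2 - 4 - 4 * b₁ ^ 2) * Real.sin (2 * (s + b₃))) ∧
    (∀ s, 0 < k s) ∧ (∃ s t : ℝ, k s ≠ k t) ∧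
      ∀ s, 3 / 4 * (deriv k s) ^ 2 - 1 / 2 * k s * deriv (deriv k) s
        - (1 + b₁ ^ 2) * (k s) ^ 4 + (k s) ^ 2 = 0 := by
  set a := √(b₂ ^ 2 - 4 - 4 * b₁ ^ 2)
  have ha_sq : a ^ 2 = b₂ ^ 2 - 4 - 4 * b₁ ^ 2 := sq_sqrt (by linarith)
  have ha_pos : 0 < a := sqrt_pos.mpr (by linarith)
  have hab : |a| < b₂ := by
    rw [abs_of_pos ha_pos, sqrt_lt' hb₂]
    linarith [sq_nonneg b₁]
  have hD := fun s => sinusoid_pos hab (2 * (s + b₃))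
  subst hk
  refine ⟨hD, fun s => div_pos two_pos (hD s), exists_two_div_sinusoid_ne b₃ ha_pos.ne',
    fun s => ?_⟩
  rw [ode_two_div_eq (hasDerivAt_sinusoid a b₂ b₃) (hasDerivAt_sinusoid_deriv a b₃)
    (fun s => (hD s).ne') (1 + b₁ ^ 2) s, sinusoid_energy, ha_sq]
  ring
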